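/- Let z_0, ..., z_d be pairwise distinct complex numbers, let C_0, ..., C_d be complex m×n matrices, and let D_0, ..., D_d be complex m×m matrices with D_j invertible for a fixed index j. Define R(z) = (∑_{k=0}^d D_k/(z − z_k))^{-1} · (∑_{k=0}^d C_k/(z − z_k)) at every z outside the support points at which ∑_{k=0}^d D_k/(z − z_k) is invertible. Then R(z) tends to D_j^{-1} C_j (entrywise, equivalently in Frobenius norm) as z tends to z_j within a punctured neighborhood of z_j. -/

import Mathlib

/-!
Multiplying both sums by `x - z j` leaves `R(x)` unchanged, since a nonzero scalar cancels in
`(c • A)⁻¹ * (c • B)`, and removes the pole at `z j`: the rescaled sums tend to `D j` and `C j`.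
Continuity of matrix inversion at the invertible `D j` then gives the limit.
-/

open Filter Topology

theorem tendsto_sub_smul_sum_inv_sub_smul {𝕜 ι E : Type*} [Field 𝕜] [TopologicalSpace 𝕜]
    [IsTopologicalDivisionRing 𝕜] [Fintype ι] [DecidableEq ι] [AddCommMonoid E] [Module 𝕜 E]
    [TopologicalSpace E] [ContinuousAdd E] [ContinuousSMul 𝕜 E] {z : ι → 𝕜}
    (hz : Function.Injective z) (M : ι → E) (j : ι) :
    Tendsto (fun x => (x - z j) • ∑ k, (x - z k)⁻¹ • M k) (𝓝[≠] (z j)) (𝓝 (M j)) := by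
  simp only [Finset.smul_sum, smul_smul]
  rw [show M j = ∑ k, if k = j then M k else 0 by simp]
  refine tendsto_finsetSum _ fun k _ => ?_
  by_cases hkj : k = j
  · subst hkj
    refine tendsto_const_nhds.congr' ?_
    filter_upwards [self_mem_nhdsWithin] with x hx
    rw [if_pos rfl, mul_inv_cancel₀ (sub_ne_zero.2 hx), one_smul]
  · have hne : z j - z k ≠ 0 := sub_ne_zero.2 (hz.ne (Ne.symm hkj))
    have hcont : ContinuousAt (fun x => ((x - z j) * (x - z k)⁻¹) • M k) (z j) := by
      fun_prop (disch := exact hne)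
    simpa [hkj] using hcont.tendsto.mono_left nhdsWithin_le_nhds

theorem Matrix.smul_inv_mul_smul {K m n : Type*} [Field K] [Fintype m] [DecidableEq m]
    {c : K} (hc : c ≠ 0) (A : Matrix m m K) (B : Matrix m n K) :
    (c • A)⁻¹ * (c • B) = A⁻¹ * B := by
  by_cases hA : IsUnit A.det
  · let : Invertible c := invertibleOfNonzero hc
    rw [Matrix.inv_smul A c hA, Matrix.smul_mul, Matrix.mul_smul, smul_smul, invOf_eq_inv,
      inv_mul_cancel₀ hc, one_smul]
  · have hcA : ¬IsUnit (c • A).det := by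
      rwa [Matrix.det_smul, IsUnit.mul_iff, not_and_or, or_iff_right]
      exact not_not.2 ((isUnit_iff_ne_zero.2 hc).pow _)
    rw [Matrix.nonsing_inv_apply_not_isUnit _ hA, Matrix.nonsing_inv_apply_not_isUnit _ hcA,
      Matrix.zero_mul, Matrix.zero_mul]

theorem Matrix.continuousAt_inv_of_isUnit_det {K n : Type*} [Field K] [TopologicalSpace K]
    [IsTopologicalDivisionRing K] [Fintype n] [DecidableEq n] {A : Matrix n n K}
    (hA : IsUnit A.det) : ContinuousAt Inv.inv A := by
  refine continuousAt_matrix_inv A ?_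
  simp only [Ring.inverse_eq_inv']
  exact continuousAt_inv₀ hA.ne_zero

theorem Filter.Tendsto.matrix_mul {α R l m n : Type*} [Fintype m] [Mul R] [AddCommMonoid R]
    [TopologicalSpace R] [ContinuousAdd R] [ContinuousMul R] {f : Filter α}
    {F : α → Matrix l m R} {G : α → Matrix m n R} {A : Matrix l m R} {B : Matrix m n R}
    (hF : Tendsto F f (𝓝 A)) (hG : Tendsto G f (𝓝 B)) :
    Tendsto (fun x => F x * G x) f (𝓝 (A * B)) :=
  ((continuous_fst.matrix_mul continuous_snd).tendsto (A, B)).comp (hF.prodMk_nhds hG)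

/-- For the non-interpolatory matrix-valued barycentric form (bary-C) with pairwise
distinct support points and `D j` invertible,
`R(x) = (∑ₖ (x − zₖ)⁻¹ • Dₖ)⁻¹ * (∑ₖ (x − zₖ)⁻¹ • Cₖ)` tends to `D j⁻¹ * C j`
(entrywise, i.e. in the topology of the matrix space) as `x → z j` within a punctured
neighborhood of `z j`. -/
theorem baryC_limit_at_support_point
    (d m n : ℕ) (z : Fin (d + 1) → ℂ)
    (CC : Fin (d + 1) → Matrix (Fin m) (Fin n) ℂ)
    (DD : Fin (d + 1) → Matrix (Fin m) (Fin m) ℂ)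
    (hz : Function.Injective z) (j : Fin (d + 1)) (hDj : IsUnit (DD j)) :
    Tendsto (fun x : ℂ =>
        (∑ k, (x - z k)⁻¹ • DD k)⁻¹ * ∑ k, (x - z k)⁻¹ • CC k)
      (𝓝[≠] (z j)) (𝓝 ((DD j)⁻¹ * CC j)) := by
  have hD := tendsto_sub_smul_sum_inv_sub_smul hz DD j
  have hC := tendsto_sub_smul_sum_inv_sub_smul hz CC j
  have hDinv := (Matrix.continuousAt_inv_of_isUnit_det
    ((Matrix.isUnit_iff_isUnit_det _).1 hDj)).tendsto.comp hD
  refine (hDinv.matrix_mul hC).congr' ?_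
  filter_upwards [self_mem_nhdsWithin] with x hx
  exact Matrix.smul_inv_mul_smul (sub_ne_zero.2 hx) _ _
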